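/- arXiv:2412.15615 — 2 statements merged into one kernel-verified Lean document; each statement's English description precedes it below -/
import Mathlib

section
/- Lower bound half of Result 2: for every multi-object subchannel game (p_Y, Φ_{B|Y}), every state ρ, and every POVM set 𝕄_{A|X}, one has P^E_err(p_Y, Φ_{B|Y}, ρ, 𝕄_{A|X}) ≥ (1 − W_F(ρ)) · (1 − W_𝔽(𝕄_{A|X})) · inf_{σ ∈ F, ℕ_{A|X} ∈ 𝔽(l,κ)} P^E_err(p_Y, Φ_{B|Y}, σ, ℕ_{A|X}). -/
open scoped BigOperators ComplexOrder

noncomputable section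

namespace MultiObject

abbrev Mat (d : ℕ) := Matrix (Fin d) (Fin d) ℂ

/-- A quantum state: positive semidefinite with unit trace. -/
def IsState {d : ℕ} (ρ : Mat d) : Prop := ρ.PosSemidef ∧ ρ.trace = 1

/-- A POVM set `M x a` indexed by input `x : Fin κ` and outcome `a : Fin l`. -/
def IsPOVMSet {d l κ : ℕ} (M : Fin κ → Fin l → Mat d) : Prop :=
  (∀ x a, (M x a).PosSemidef) ∧ (∀ x, ∑ a, M x a = 1)

/-- A probability mass function on a finite type. -/
def IsPMF {n : ℕ} (p : Fin n → ℝ) : Prop := (∀ i, 0 ≤ p i) ∧ ∑ i, p i = 1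

/-- Simulability of the POVM set `N` by the POVM set `M` via classical
pre- and post-processing. -/
def Simulable {d l κ m τ : ℕ} (N : Fin τ → Fin m → Mat d)
    (M : Fin κ → Fin l → Mat d) : Prop :=
  ∃ (nz : ℕ) (q : Fin nz → ℝ) (r : Fin τ → Fin nz → Fin κ → ℝ)
    (s : Fin τ → Fin nz → Fin l → Fin m → ℝ),
    IsPMF q ∧ (∀ y z, IsPMF (r y z)) ∧ (∀ y z a, IsPMF (s y z a)) ∧
    ∀ y b, N y b = ∑ z, ∑ x, ∑ a, (q z * r y z x * s y z a b) • M x a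

/-- Compatibility (joint measurability) of a POVM set. -/
def Compatible {d l κ : ℕ} (M : Fin κ → Fin l → Mat d) : Prop :=
  ∃ (nl : ℕ) (G : Fin nl → Mat d) (pc : Fin κ → Fin nl → Fin l → ℝ),
    (∀ i, (G i).PosSemidef) ∧ (∑ i, G i = 1) ∧ (∀ x lam, IsPMF (pc x lam)) ∧
    ∀ x a, M x a = ∑ lam, pc x lam a • G lam

/-- A subchannel: positive and trace-nonincreasing on PSD matrices. -/
def IsSubchannel {d : ℕ} (φ : Mat d →ₗ[ℂ] Mat d) : Prop :=
  (∀ A : Mat d, A.PosSemidef → (φ A).PosSemidef) ∧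
  (∀ A : Mat d, A.PosSemidef → ((φ A).trace).re ≤ (A.trace).re)

/-- An instrument: subchannels summing to a trace-preserving map. -/
def IsInstrument {d m : ℕ} (Φ : Fin m → (Mat d →ₗ[ℂ] Mat d)) : Prop :=
  (∀ b, IsSubchannel (Φ b)) ∧ (∀ A : Mat d, Matrix.trace (∑ b, Φ b A) = Matrix.trace A)

/-- A multi-object subchannel game: a PMF `p` with positive weights and a
family of instruments with common outcome set. -/
def IsGame {d m τ : ℕ} (p : Fin τ → ℝ) (Φ : Fin τ → Fin m → (Mat d →ₗ[ℂ] Mat d)) : Prop :=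
  IsPMF p ∧ (∀ y, 0 < p y) ∧ (∀ y, IsInstrument (Φ y))

/-- The value `∑_{b,y} tr[N_{b|y} φ_{b|y}(ρ)] p(y)`. -/
def gameValue {d m τ : ℕ} (p : Fin τ → ℝ) (Φ : Fin τ → Fin m → (Mat d →ₗ[ℂ] Mat d))
    (ρ : Mat d) (N : Fin τ → Fin m → Mat d) : ℝ :=
  ∑ y, ∑ b, p y * (Matrix.trace (N y b * Φ y b ρ)).re

/-- Success probability for discrimination. -/
def PsuccD {d l κ m τ : ℕ} (p : Fin τ → ℝ) (Φ : Fin τ → Fin m → (Mat d →ₗ[ℂ] Mat d))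
    (ρ : Mat d) (M : Fin κ → Fin l → Mat d) : ℝ :=
  sSup {v : ℝ | ∃ N : Fin τ → Fin m → Mat d, Simulable N M ∧ v = gameValue p Φ ρ N}

/-- Error probability for exclusion. -/
def PerrE {d l κ m τ : ℕ} (p : Fin τ → ℝ) (Φ : Fin τ → Fin m → (Mat d →ₗ[ℂ] Mat d))
    (ρ : Mat d) (M : Fin κ → Fin l → Mat d) : ℝ :=
  sInf {v : ℝ | ∃ N : Fin τ → Fin m → Mat d, Simulable N M ∧ v = gameValue p Φ ρ N}

/-- Free (normalised) states of a cone `𝓕`. -/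
def freeStates {d : ℕ} (𝓕 : Set (Mat d)) : Set (Mat d) := {σ ∈ 𝓕 | Matrix.trace σ = 1}

/-- Feasible set for the generalised robustness of a state. -/
def RFSet {d : ℕ} (F : Set (Mat d)) (ρ : Mat d) : Set ℝ :=
  {r : ℝ | 0 ≤ r ∧ ∃ ρG σ : Mat d, IsState ρG ∧ σ ∈ F ∧ ρ + r • ρG = (1 + r) • σ}

/-- Generalised robustness of a state. -/
def RF {d : ℕ} (F : Set (Mat d)) (ρ : Mat d) : ℝ := sInf (RFSet F ρ)

/-- Feasible set for the weight of resource of a state. -/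
def WFSet {d : ℕ} (F : Set (Mat d)) (ρ : Mat d) : Set ℝ :=
  {w : ℝ | 0 ≤ w ∧ w ≤ 1 ∧ ∃ ρG σ : Mat d, IsState ρG ∧ σ ∈ F ∧ ρ = w • ρG + (1 - w) • σ}

/-- Weight of resource of a state. -/
def WF {d : ℕ} (F : Set (Mat d)) (ρ : Mat d) : ℝ := sInf (WFSet F ρ)

/-- Feasible set for the generalised robustness of a POVM set. -/
def RFMSet {d l κ : ℕ} (𝔽 : Set (Fin κ → Fin l → Mat d))
    (M : Fin κ → Fin l → Mat d) : Set ℝ :=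
  {r : ℝ | 0 ≤ r ∧ ∃ G Ff : Fin κ → Fin l → Mat d, IsPOVMSet G ∧ Ff ∈ 𝔽 ∧
     ∀ x a, M x a + r • G x a = (1 + r) • Ff x a}

/-- Generalised robustness of a POVM set. -/
def RFM {d l κ : ℕ} (𝔽 : Set (Fin κ → Fin l → Mat d)) (M : Fin κ → Fin l → Mat d) : ℝ :=
  sInf (RFMSet 𝔽 M)

/-- Feasible set for the weight of resource of a POVM set. -/
def WFMSet {d l κ : ℕ} (𝔽 : Set (Fin κ → Fin l → Mat d))
    (M : Fin κ → Fin l → Mat d) : Set ℝ :=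
  {w : ℝ | 0 ≤ w ∧ w ≤ 1 ∧ ∃ G Ff : Fin κ → Fin l → Mat d, IsPOVMSet G ∧ Ff ∈ 𝔽 ∧
     ∀ x a, M x a = w • G x a + (1 - w) • Ff x a}

/-- Weight of resource of a POVM set. -/
def WFM {d l κ : ℕ} (𝔽 : Set (Fin κ → Fin l → Mat d)) (M : Fin κ → Fin l → Mat d) : ℝ :=
  sInf (WFMSet 𝔽 M)

/-- Conic hull of a set in a real module. -/
def conicHull {α : Type*} [AddCommMonoid α] [Module ℝ α] (S : Set α) : Set α :=
  {A | ∃ (n : ℕ) (c : Fin n → ℝ) (f : Fin n → α),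
    (∀ i, 0 ≤ c i) ∧ (∀ i, f i ∈ S) ∧ A = ∑ i, c i • f i}

/-- `𝓕` is a closed convex cone of PSD matrices with at least one free state. -/
def IsFreeStateCone {d : ℕ} (𝓕 : Set (Mat d)) : Prop :=
  (∀ A ∈ 𝓕, Matrix.PosSemidef A) ∧
  (∀ A ∈ 𝓕, ∀ c : ℝ, 0 ≤ c → c • A ∈ 𝓕) ∧
  (∀ A ∈ 𝓕, ∀ B ∈ 𝓕, A + B ∈ 𝓕) ∧
  IsClosed 𝓕 ∧ (freeStates 𝓕).Nonempty

/-- `𝔽` is a set of POVM sets whose conic hull is closed. -/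
def GoodPOVMFree {d l κ : ℕ} (𝔽 : Set (Fin κ → Fin l → Mat d)) : Prop :=
  (∀ M ∈ 𝔽, IsPOVMSet M) ∧ IsClosed (conicHull 𝔽)

/-- The collection `𝔽` of free POVM sets is closed under simulability. -/
def ClosedUnderSim {d : ℕ} (𝔽 : ∀ l κ : ℕ, Set (Fin κ → Fin l → Mat d)) : Prop :=
  ∀ {l κ m τ : ℕ} (M : Fin κ → Fin l → Mat d) (N : Fin τ → Fin m → Mat d),
    M ∈ 𝔽 l κ → Simulable N M → N ∈ 𝔽 m τ

/-- Best fully free success probability. -/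
def Dbest {d l κ m τ : ℕ} (p : Fin τ → ℝ) (Φ : Fin τ → Fin m → (Mat d →ₗ[ℂ] Mat d))
    (F : Set (Mat d)) (𝔽 : Set (Fin κ → Fin l → Mat d)) : ℝ :=
  sSup {v : ℝ | ∃ (σ : Mat d) (N : Fin κ → Fin l → Mat d),
    σ ∈ F ∧ N ∈ 𝔽 ∧ v = PsuccD p Φ σ N}

/-- Best fully free error probability. -/
def Ebest {d l κ m τ : ℕ} (p : Fin τ → ℝ) (Φ : Fin τ → Fin m → (Mat d →ₗ[ℂ] Mat d))
    (F : Set (Mat d)) (𝔽 : Set (Fin κ → Fin l → Mat d)) : ℝ :=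
  sInf {v : ℝ | ∃ (σ : Mat d) (N : Fin κ → Fin l → Mat d),
    σ ∈ F ∧ N ∈ 𝔽 ∧ v = PerrE p Φ σ N}

/-- Operator norm of a PSD matrix via the variational characterisation
`‖Z‖_op = sup_{η state} tr[Z η]`. -/
def opNormPSD {d : ℕ} (Z : Mat d) : ℝ :=
  sSup {v : ℝ | ∃ η : Mat d, IsState η ∧ v = (Matrix.trace (Z * η)).re}

/-- The linear map `η ↦ tr[Z η] • χ`. -/
def funMap {d : ℕ} (Z χ : Mat d) : Mat d →ₗ[ℂ] Mat d where
  toFun η := Matrix.trace (Z * η) • χ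
  map_add' η₁ η₂ := by
    simp [Matrix.mul_add, add_smul]
  map_smul' c η := by
    simp [Matrix.mul_smul, smul_smul]

/-- The coefficient `α = 1/(‖Z^ρ‖_op ∑_{a,x} tr[Z_{a|x}] p(x)⁻¹)`. -/
def alphaConst {d l κ : ℕ} (Zr : Mat d) (Zm : Fin κ → Fin l → Mat d)
    (p : Fin κ → ℝ) : ℝ :=
  (opNormPSD Zr * ∑ x, ∑ a, (Matrix.trace (Zm x a)).re / p x)⁻¹

/-- The function `F_y(η) = α tr[Z^ρ η] ∑_a tr[Z_{a|y}] p(y)⁻¹`. -/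
def FyD {d l κ : ℕ} (Zr : Mat d) (Zm : Fin κ → Fin l → Mat d) (p : Fin κ → ℝ)
    (y : Fin κ) (η : Mat d) : ℝ :=
  alphaConst Zr Zm p * (Matrix.trace (Zr * η)).re * (∑ a, (Matrix.trace (Zm y a)).re) / p y

/-- The discrimination game built from dual-feasible operators. -/
def discPsi {d l κ : ℕ} (Zr : Mat d) (Zm : Fin κ → Fin l → Mat d) (p : Fin κ → ℝ)
    (J : ℕ) (χ : Mat d) : Fin κ → Fin (l + J) → (Mat d →ₗ[ℂ] Mat d) :=
  fun y b =>
    if h : (b : ℕ) < l then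
      (((alphaConst Zr Zm p) / p y : ℝ) : ℂ) • funMap Zr (Zm y ⟨b, h⟩)
    else
      ((J : ℂ))⁻¹ • (funMap 1 χ -
        (((alphaConst Zr Zm p) * (∑ a, (Matrix.trace (Zm y a)).re) / p y : ℝ) : ℂ) •
          funMap Zr χ)

/-- The coefficient `β = 1/(2‖Y^ρ‖_op ∑_{a,x} tr[Y_{a|x}] p(x)⁻¹)`. -/
def betaConst {d l κ : ℕ} (Yr : Mat d) (Ym : Fin κ → Fin l → Mat d)
    (p : Fin κ → ℝ) : ℝ :=
  (2 * opNormPSD Yr * ∑ x, ∑ a, (Matrix.trace (Ym x a)).re / p x)⁻¹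

/-- The function `G_y(η) = β tr[Y^ρ η] ∑_a tr[Y_{a|y}] p(y)⁻¹`. -/
def GyE {d l κ : ℕ} (Yr : Mat d) (Ym : Fin κ → Fin l → Mat d) (p : Fin κ → ℝ)
    (y : Fin κ) (η : Mat d) : ℝ :=
  betaConst Yr Ym p * (Matrix.trace (Yr * η)).re * (∑ a, (Matrix.trace (Ym y a)).re) / p y

/-- The state `ξ_y = (∑_b p(b|y) Y_{b|y}) / (∑_b p(b|y) tr[Y_{b|y}])`. -/
def xiE {d l κ : ℕ} (Ym : Fin κ → Fin l → Mat d) (pc : Fin κ → Fin l → ℝ)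
    (y : Fin κ) : Mat d :=
  ((∑ b, pc y b * (Matrix.trace (Ym y b)).re)⁻¹ : ℝ) • ∑ b, pc y b • Ym y b

/-- The exclusion game built from dual-feasible operators. -/
def exclPsi {d l κ : ℕ} (Yr : Mat d) (Ym : Fin κ → Fin l → Mat d) (p : Fin κ → ℝ)
    (pc : Fin κ → Fin l → ℝ) : Fin κ → Fin (l + 1) → (Mat d →ₗ[ℂ] Mat d) :=
  fun y b =>
    if h : (b : ℕ) < l then
      ((betaConst Yr Ym p / p y : ℝ) : ℂ) • funMap Yr (Ym y ⟨b, h⟩)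
    else
      funMap 1 (xiE Ym pc y) -
        ((betaConst Yr Ym p * (∑ a, (Matrix.trace (Ym y a)).re) / p y : ℝ) : ℂ) •
          funMap Yr (xiE Ym pc y)


section Aux

lemma psd_smul_real {d : ℕ} {A : Mat d} (h : A.PosSemidef) {c : ℝ} (hc : 0 ≤ c) :
    (c • A).PosSemidef := by
  refine Matrix.posSemidef_iff_dotProduct_mulVec.mpr ⟨?_, ?_⟩
  · unfold Matrix.IsHermitian
    rw [Matrix.conjTranspose_smul, h.isHermitian.eq]
    norm_num
  · intro x
    rw [Matrix.smul_mulVec, dotProduct_smul]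
    have := h.dotProduct_mulVec_nonneg x
    have : (0:ℂ) ≤ (c:ℂ) * (dotProduct (star x) (A.mulVec x)) :=
      mul_nonneg (by exact_mod_cast hc) this
    simpa [Complex.real_smul] using this

lemma psd_diag_re_nonneg {d : ℕ} {A : Mat d} (h : A.PosSemidef) (i : Fin d) :
    0 ≤ (A i i).re := by
  have := h.dotProduct_mulVec_nonneg (Pi.single i 1)
  simp [dotProduct, Matrix.mulVec, Pi.single_apply] at this
  exact (Complex.le_def.mp this).1

lemma psd_trace_re_nonneg {d : ℕ} {A : Mat d} (h : A.PosSemidef) :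
    0 ≤ (Matrix.trace A).re := by
  rw [Matrix.trace]
  simp only [Complex.re_sum]
  exact Finset.sum_nonneg fun i _ => psd_diag_re_nonneg h i

lemma trace_mul_psd_nonneg {d : ℕ} {A B : Mat d} (hA : A.PosSemidef) (hB : B.PosSemidef) :
    0 ≤ (Matrix.trace (A * B)).re := by
  obtain ⟨S, hS⟩ : ∃ S : Mat d, B = star S * S := by
    open scoped MatrixOrder in
    exact CStarAlgebra.nonneg_iff_eq_star_mul_self.mp hB.nonneg
  have h1 : A * B = A * (star S * S) := by rw [hS]
  have h2 : Matrix.trace (A * (star S * S)) = Matrix.trace (S * A * star S) := by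
    rw [← Matrix.mul_assoc, Matrix.trace_mul_cycle]
  have h3 : (S * A * star S).PosSemidef := hA.mul_mul_conjTranspose_same S
  rw [h1, h2]
  exact psd_trace_re_nonneg h3

lemma psd_sum {d : ℕ} {ι : Type*} (s : Finset ι) (f : ι → Mat d)
    (h : ∀ i ∈ s, (f i).PosSemidef) : (∑ i ∈ s, f i).PosSemidef := by
  classical
  induction s using Finset.induction_on with
  | empty => simpa using Matrix.PosSemidef.zero
  | insert _ _ hx ih =>
      rw [Finset.sum_insert hx]
      exact Matrix.PosSemidef.add (h _ (Finset.mem_insert_self _ _))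
        (ih fun i hi => h i (Finset.mem_insert_of_mem hi))

lemma trace_re_mul_smul_left {d : ℕ} (c : ℝ) (A B : Mat d) :
    (Matrix.trace ((c • A) * B)).re = c * (Matrix.trace (A * B)).re := by
  rw [Matrix.smul_mul, Matrix.trace_smul]
  simp [Complex.real_smul]

lemma trace_re_mul_smul_right {d : ℕ} (c : ℝ) (A B : Mat d) :
    (Matrix.trace (A * (c • B))).re = c * (Matrix.trace (A * B)).re := by
  rw [Matrix.mul_smul, Matrix.trace_smul]
  simp [Complex.real_smul]

end Aux

section Aux2

lemma gameValue_state_comb {d m τ : ℕ} (p : Fin τ → ℝ) (Φ : Fin τ → Fin m → (Mat d →ₗ[ℂ] Mat d))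
    (w w' : ℝ) (ρ1 ρ2 : Mat d) (N : Fin τ → Fin m → Mat d) :
    gameValue p Φ (w • ρ1 + w' • ρ2) N
      = w * gameValue p Φ ρ1 N + w' * gameValue p Φ ρ2 N := by
  have key : ∀ y b, (Matrix.trace (N y b * Φ y b (w • ρ1 + w' • ρ2))).re
      = w * (Matrix.trace (N y b * Φ y b ρ1)).re
        + w' * (Matrix.trace (N y b * Φ y b ρ2)).re := by
    intro y b
    rw [map_add, LinearMap.map_smul_of_tower, LinearMap.map_smul_of_tower, mul_add,
      Matrix.trace_add]
    simp [trace_re_mul_smul_right]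
  simp only [gameValue, key, mul_add, Finset.sum_add_distrib, Finset.mul_sum, mul_left_comm]

lemma gameValue_povm_comb {d m τ : ℕ} (p : Fin τ → ℝ) (Φ : Fin τ → Fin m → (Mat d →ₗ[ℂ] Mat d))
    (σ : Mat d) (v v' : ℝ) (N N1 N2 : Fin τ → Fin m → Mat d)
    (h : ∀ y b, N y b = v • N1 y b + v' • N2 y b) :
    gameValue p Φ σ N = v * gameValue p Φ σ N1 + v' * gameValue p Φ σ N2 := by
  have key : ∀ y b, (Matrix.trace (N y b * Φ y b σ)).re
      = v * (Matrix.trace (N1 y b * Φ y b σ)).re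
        + v' * (Matrix.trace (N2 y b * Φ y b σ)).re := by
    intro y b
    rw [h y b, add_mul, Matrix.trace_add]
    simp [trace_re_mul_smul_left]
  simp only [gameValue, key, mul_add, Finset.sum_add_distrib, Finset.mul_sum, mul_left_comm]

lemma simulable_posSemidef {d l κ m τ : ℕ} {N : Fin τ → Fin m → Mat d}
    {M : Fin κ → Fin l → Mat d} (hsim : Simulable N M) (hM : IsPOVMSet M) :
    ∀ y b, (N y b).PosSemidef := by
  obtain ⟨nz, q, r, s, hq, hr, hs, hN⟩ := hsim
  intro y b
  rw [hN y b]
  refine psd_sum _ _ fun z _ => psd_sum _ _ fun x _ => psd_sum _ _ fun a _ => ?_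
  exact psd_smul_real (hM.1 x a)
    (mul_nonneg (mul_nonneg (hq.1 z) ((hr y z).1 x)) ((hs y z a).1 b))

lemma gameValue_nonneg {d m τ : ℕ} {p : Fin τ → ℝ} {Φ : Fin τ → Fin m → (Mat d →ₗ[ℂ] Mat d)}
    {ρ : Mat d} {N : Fin τ → Fin m → Mat d} (hp : ∀ y, 0 ≤ p y)
    (hΦ : ∀ y, IsInstrument (Φ y)) (hρ : ρ.PosSemidef) (hN : ∀ y b, (N y b).PosSemidef) :
    0 ≤ gameValue p Φ ρ N := by
  refine Finset.sum_nonneg fun y _ => Finset.sum_nonneg fun b _ => ?_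
  exact mul_nonneg (hp y) (trace_mul_psd_nonneg (hN y b) (((hΦ y).1 b).1 ρ hρ))

end Aux2

section Aux3

lemma perrE_set_nonneg {d l κ m τ : ℕ} {p : Fin τ → ℝ} {Φ : Fin τ → Fin m → (Mat d →ₗ[ℂ] Mat d)}
    {ρ : Mat d} {M : Fin κ → Fin l → Mat d} (hp : ∀ y, 0 ≤ p y)
    (hΦ : ∀ y, IsInstrument (Φ y)) (hρ : ρ.PosSemidef) (hM : IsPOVMSet M) :
    ∀ v ∈ {v : ℝ | ∃ N : Fin τ → Fin m → Mat d, Simulable N M ∧ v = gameValue p Φ ρ N}, 0 ≤ v := by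
  rintro v ⟨N, hsim, rfl⟩
  exact gameValue_nonneg hp hΦ hρ (simulable_posSemidef hsim hM)

lemma perrE_nonneg {d l κ m τ : ℕ} {p : Fin τ → ℝ} {Φ : Fin τ → Fin m → (Mat d →ₗ[ℂ] Mat d)}
    {ρ : Mat d} {M : Fin κ → Fin l → Mat d} (hp : ∀ y, 0 ≤ p y)
    (hΦ : ∀ y, IsInstrument (Φ y)) (hρ : ρ.PosSemidef) (hM : IsPOVMSet M) :
    0 ≤ PerrE p Φ ρ M :=
  Real.sInf_nonneg (perrE_set_nonneg hp hΦ hρ hM)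

lemma perrE_le_gameValue {d l κ m τ : ℕ} {p : Fin τ → ℝ}
    {Φ : Fin τ → Fin m → (Mat d →ₗ[ℂ] Mat d)}
    {ρ : Mat d} {M : Fin κ → Fin l → Mat d} {N : Fin τ → Fin m → Mat d}
    (hp : ∀ y, 0 ≤ p y) (hΦ : ∀ y, IsInstrument (Φ y)) (hρ : ρ.PosSemidef)
    (hM : IsPOVMSet M) (hsim : Simulable N M) :
    PerrE p Φ ρ M ≤ gameValue p Φ ρ N :=
  csInf_le ⟨0, perrE_set_nonneg hp hΦ hρ hM⟩ ⟨N, hsim, rfl⟩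

lemma weight_step {S : Set ℝ} (hne : S.Nonempty) (c P : ℝ) (hc : 0 ≤ c) (hP : 0 ≤ P)
    (h : ∀ w ∈ S, (1 - w) * c ≤ P) : (1 - sInf S) * c ≤ P := by
  rcases eq_or_lt_of_le hc with h0 | hpos
  · rw [← h0, mul_zero]; exact hP
  · have hlb : ∀ w ∈ S, (c - P) / c ≤ w := by
      intro w hw
      rw [div_le_iff₀ hpos]
      nlinarith [h w hw]
    have h2 : (c - P) / c ≤ sInf S := le_csInf hne hlb
    have h3 : ((c - P) / c) * c = c - P := div_mul_cancel₀ _ (ne_of_gt hpos)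
    nlinarith [mul_le_mul_of_nonneg_right h2 hc]

end Aux3

section Aux4

lemma trivSim {d l κ m τ : ℕ} (hκ : 0 < κ) (hm : 0 < m) {M : Fin κ → Fin l → Mat d}
    (hM : IsPOVMSet M) :
    Simulable (fun (_ : Fin τ) (b : Fin m) => if b = ⟨0, hm⟩ then (1 : Mat d) else 0) M := by
  refine ⟨1, fun _ => 1, fun _ _ x => if x = ⟨0, hκ⟩ then 1 else 0,
    fun _ _ _ b => if b = ⟨0, hm⟩ then 1 else 0, ⟨fun _ => zero_le_one, by simp⟩,
    fun y z => ⟨fun x => by positivity, by simp⟩,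
    fun y z a => ⟨fun b => by positivity, by simp⟩, ?_⟩
  intro y b
  by_cases hb : b = ⟨0, hm⟩ <;>
    simp [hb, Fin.sum_univ_one, ite_smul, Finset.sum_ite_eq', mul_ite, ite_mul, hM.2]

end Aux4

/-- lower bound half of Result 2. -/
theorem result2_lower_bound {d l κ m τ : ℕ}
    (𝓕 : Set (Mat d)) (h𝓕 : IsFreeStateCone 𝓕)
    (𝔽 : ∀ l κ : ℕ, Set (Fin κ → Fin l → Mat d))
    (h𝔽 : ∀ l κ : ℕ, GoodPOVMFree (𝔽 l κ))
    (h𝔽sim : ClosedUnderSim 𝔽) (h𝔽ne : (𝔽 l κ).Nonempty)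
    (p : Fin τ → ℝ) (Φ : Fin τ → Fin m → (Mat d →ₗ[ℂ] Mat d)) (hG : IsGame p Φ)
    (ρ : Mat d) (hρ : IsState ρ) (M : Fin κ → Fin l → Mat d) (hM : IsPOVMSet M) :
    (1 - WF (freeStates 𝓕) ρ) * (1 - WFM (𝔽 l κ) M) *
        Ebest p Φ (freeStates 𝓕) (𝔽 l κ) ≤
      PerrE p Φ ρ M := by
  classical
  have hd : 0 < d := by
    rcases Nat.eq_zero_or_pos d with h | h
    · exfalso; have h2 := hρ.2; subst h; simp [Matrix.trace] at h2
    · exact h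
  have hτ : 0 < τ := by
    rcases Nat.eq_zero_or_pos τ with h | h
    · exfalso; have h2 := hG.1.2; subst h; simp at h2
    · exact h
  have hp0 : ∀ y, 0 ≤ p y := hG.1.1
  have hΦ : ∀ y, IsInstrument (Φ y) := hG.2.2
  obtain ⟨σ0, hσ0⟩ := h𝓕.2.2.2.2
  obtain ⟨F0, hF0⟩ := h𝔽ne
  have hm : 0 < m := by
    rcases Nat.eq_zero_or_pos m with h | h
    · exfalso
      have h2 := (hΦ ⟨0, hτ⟩).2 (1 : Mat d)
      subst h
      simp only [Finset.univ_eq_empty, Finset.sum_empty, Matrix.trace_zero,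
        Matrix.trace_one] at h2
      have : (d : ℂ) ≠ 0 := Nat.cast_ne_zero.mpr (Nat.pos_iff_ne_zero.mp hd)
      simp [Fintype.card_fin] at h2
      exact this (by exact_mod_cast h2.symm)
    · exact h
  rcases Nat.eq_zero_or_pos κ with hκ0 | hκ
  · -- degenerate case κ = 0 : no simulable POVM set exists
    subst hκ0
    have hnosim : ∀ (N : Fin τ → Fin m → Mat d) (M' : Fin 0 → Fin l → Mat d),
        ¬ Simulable N M' := by
      rintro N M' ⟨nz, q, r, s, hq, hr, -, -⟩
      have hnz : 0 < nz := by
        rcases Nat.eq_zero_or_pos nz with h | h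
        · exfalso; have h2 := hq.2; subst h; simp at h2
        · exact h
      have h2 := (hr ⟨0, hτ⟩ ⟨0, hnz⟩).2
      simp at h2
    have hPempty : ∀ (σ : Mat d) (M' : Fin 0 → Fin l → Mat d), PerrE p Φ σ M' = 0 := by
      intro σ M'
      have hset : {v : ℝ | ∃ N : Fin τ → Fin m → Mat d,
          Simulable N M' ∧ v = gameValue p Φ σ N} = ∅ := by
        ext v
        simp only [Set.mem_setOf_eq, Set.mem_empty_iff_false, iff_false, not_exists]
        rintro N ⟨hsim, -⟩
        exact hnosim N M' hsim
      rw [PerrE, hset, Real.sInf_empty]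
    have hE : Ebest p Φ (freeStates 𝓕) (𝔽 l 0) = 0 := by
      have hset : {v : ℝ | ∃ (σ : Mat d) (N : Fin 0 → Fin l → Mat d),
          σ ∈ freeStates 𝓕 ∧ N ∈ 𝔽 l 0 ∧ v = PerrE p Φ σ N} = {0} := by
        ext v
        simp only [Set.mem_setOf_eq, Set.mem_singleton_iff]
        constructor
        · rintro ⟨σ, N, -, -, rfl⟩; exact hPempty σ N
        · rintro rfl; exact ⟨σ0, F0, hσ0, hF0, (hPempty σ0 F0).symm⟩
      rw [Ebest, hset, csInf_singleton]
    rw [hE, mul_zero, hPempty ρ M]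
  -- main case
  have hl : 0 < l := by
    rcases Nat.eq_zero_or_pos l with h | h
    · exfalso
      have h2 := hM.2 ⟨0, hκ⟩
      subst h
      simp only [Finset.univ_eq_empty, Finset.sum_empty] at h2
      have h3 := congrArg Matrix.trace h2
      simp only [Matrix.trace_zero, Matrix.trace_one, Fintype.card_fin] at h3
      have : (d : ℂ) ≠ 0 := Nat.cast_ne_zero.mpr (Nat.pos_iff_ne_zero.mp hd)
      exact this h3.symm
    · exact h
  have hσ0psd : ∀ σ ∈ freeStates 𝓕, Matrix.PosSemidef σ := fun σ hσ => h𝓕.1 σ hσ.1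
  set E := Ebest p Φ (freeStates 𝓕) (𝔽 l κ) with hEdef
  set P := PerrE p Φ ρ M with hPdef
  have hEset_nonneg : ∀ v ∈ {v : ℝ | ∃ (σ : Mat d) (N : Fin κ → Fin l → Mat d),
      σ ∈ freeStates 𝓕 ∧ N ∈ 𝔽 l κ ∧ v = PerrE p Φ σ N}, 0 ≤ v := by
    rintro v ⟨σ, N, hσ, hN, rfl⟩
    exact perrE_nonneg hp0 hΦ (hσ0psd σ hσ) ((h𝔽 l κ).1 N hN)
  have hE0 : 0 ≤ E := Real.sInf_nonneg hEset_nonneg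
  have hP0 : 0 ≤ P := perrE_nonneg hp0 hΦ hρ.1 hM
  have hPne : {v : ℝ | ∃ N : Fin τ → Fin m → Mat d,
      Simulable N M ∧ v = gameValue p Φ ρ N}.Nonempty :=
    ⟨_, _, trivSim hκ hm hM, rfl⟩
  have core : ∀ w ∈ WFSet (freeStates 𝓕) ρ, ∀ v ∈ WFMSet (𝔽 l κ) M,
      (1 - w) * ((1 - v) * E) ≤ P := by
    rintro w ⟨hw0, hw1, ρG, σ, hρG, hσ, hρdec⟩ v ⟨hv0, hv1, G, Ff, hGpovm, hFf, hMdec⟩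
    rw [hPdef, PerrE]
    refine le_csInf hPne ?_
    rintro val ⟨N, hsim, rfl⟩
    obtain ⟨nz, q, r, s, hq, hr, hs, hNdef⟩ := hsim
    set NG : Fin τ → Fin m → Mat d :=
      fun y b => ∑ z, ∑ x, ∑ a, (q z * r y z x * s y z a b) • G x a with hNG
    set NF : Fin τ → Fin m → Mat d :=
      fun y b => ∑ z, ∑ x, ∑ a, (q z * r y z x * s y z a b) • Ff x a with hNF
    have hsimG : Simulable NG G := ⟨nz, q, r, s, hq, hr, hs, fun y b => rfl⟩
    have hsimF : Simulable NF Ff := ⟨nz, q, r, s, hq, hr, hs, fun y b => rfl⟩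
    have hsmul : ∀ (c : ℝ) (X Y : Mat d),
        c • (v • X + (1 - v) • Y) = v • (c • X) + (1 - v) • (c • Y) := by
      intro c X Y
      rw [smul_add, smul_comm c v, smul_comm c (1 - v)]
    have hsplit : ∀ y b, N y b = v • NG y b + (1 - v) • NF y b := by
      intro y b
      simp only [hNdef y b, hMdec, hsmul, Finset.sum_add_distrib, Finset.smul_sum, hNG, hNF]
    have hgv1 : gameValue p Φ ρ N
        = w * gameValue p Φ ρG N + (1 - w) * gameValue p Φ σ N := by
      rw [hρdec]; exact gameValue_state_comb p Φ w (1 - w) ρG σ N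
    have hgv2 : gameValue p Φ σ N
        = v * gameValue p Φ σ NG + (1 - v) * gameValue p Φ σ NF :=
      gameValue_povm_comb p Φ σ v (1 - v) N NG NF hsplit
    have hσpsd : σ.PosSemidef := h𝓕.1 σ hσ.1
    have hA : 0 ≤ gameValue p Φ ρG N :=
      gameValue_nonneg hp0 hΦ hρG.1
        (simulable_posSemidef ⟨nz, q, r, s, hq, hr, hs, hNdef⟩ hM)
    have hB : 0 ≤ gameValue p Φ σ NG :=
      gameValue_nonneg hp0 hΦ hσpsd (simulable_posSemidef hsimG hGpovm)
    have hC : E ≤ gameValue p Φ σ NF := by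
      have h1 : E ≤ PerrE p Φ σ Ff :=
        csInf_le ⟨0, hEset_nonneg⟩ ⟨σ, Ff, hσ, hFf, rfl⟩
      have h2 : PerrE p Φ σ Ff ≤ gameValue p Φ σ NF :=
        perrE_le_gameValue hp0 hΦ hσpsd ((h𝔽 l κ).1 Ff hFf) hsimF
      linarith
    have h1w : (0:ℝ) ≤ 1 - w := by linarith
    have h1v : (0:ℝ) ≤ 1 - v := by linarith
    have step1 : (1 - v) * E ≤ v * gameValue p Φ σ NG + (1 - v) * gameValue p Φ σ NF := by
      have := mul_le_mul_of_nonneg_left hC h1v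
      nlinarith [mul_nonneg hv0 hB]
    have step2 : (1 - w) * ((1 - v) * E)
        ≤ (1 - w) * (v * gameValue p Φ σ NG + (1 - v) * gameValue p Φ σ NF) :=
      mul_le_mul_of_nonneg_left step1 h1w
    have hwA : 0 ≤ w * gameValue p Φ ρG N := mul_nonneg hw0 hA
    rw [hgv1, hgv2]
    linarith [step2, hwA]
  have h1mem : (1:ℝ) ∈ WFSet (freeStates 𝓕) ρ :=
    ⟨zero_le_one, le_refl 1, ρ, σ0, hρ, hσ0, by simp⟩
  have h1memM : (1:ℝ) ∈ WFMSet (𝔽 l κ) M :=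
    ⟨zero_le_one, le_refl 1, M, F0, hM, hF0, fun x a => by simp⟩
  have hWne : (WFSet (freeStates 𝓕) ρ).Nonempty := ⟨1, h1mem⟩
  have hWMne : (WFMSet (𝔽 l κ) M).Nonempty := ⟨1, h1memM⟩
  have hWF1 : WF (freeStates 𝓕) ρ ≤ 1 :=
    csInf_le ⟨0, fun w hw => hw.1⟩ h1mem
  have stepA : ∀ v ∈ WFMSet (𝔽 l κ) M,
      (1 - v) * ((1 - WF (freeStates 𝓕) ρ) * E) ≤ P := by
    intro v hv
    have heq : (1 - v) * ((1 - WF (freeStates 𝓕) ρ) * E)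
        = (1 - WF (freeStates 𝓕) ρ) * ((1 - v) * E) := by ring
    rw [heq, WF]
    exact weight_step hWne ((1 - v) * E) P (mul_nonneg (by linarith [hv.2.1]) hE0) hP0
      (fun w hw => core w hw v hv)
  have final : (1 - WFM (𝔽 l κ) M) * ((1 - WF (freeStates 𝓕) ρ) * E) ≤ P := by
    rw [WFM]
    exact weight_step hWMne ((1 - WF (freeStates 𝓕) ρ) * E) P
      (mul_nonneg (by linarith [hWF1]) hE0) hP0 stepA
  calc (1 - WF (freeStates 𝓕) ρ) * (1 - WFM (𝔽 l κ) M) * E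
      = (1 - WFM (𝔽 l κ) M) * ((1 - WF (freeStates 𝓕) ρ) * E) := by ring
    _ ≤ P := final

end MultiObject
end
end

section
/- Dual conic program for the generalised robustness of a GPT state: let (V, Ω) be a GPT and ω ∈ Ω a state with R^GP_F(ω) < ∞. Then 1 + R^GP_F(ω) = sup { ⟨z, ω⟩ : z ∈ V₊°, ⟨z, σ⟩ ≤ 1 for all σ ∈ F }, and the infimum defining R^GP_F(ω) is attained. -/
open scoped BigOperators RealInnerProductSpace

noncomputable section

namespace MultiObjectGPT

variable {V : Type*} [NormedAddCommGroup V] [InnerProductSpace ℝ V]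

/-- A probability mass function on a finite type. -/
def IsPMF {n : ℕ} (p : Fin n → ℝ) : Prop := (∀ i, 0 ≤ p i) ∧ ∑ i, p i = 1

/-- Conic hull of a set in a real module. -/
def conicHull {α : Type*} [AddCommMonoid α] [Module ℝ α] (S : Set α) : Set α :=
  {A | ∃ (n : ℕ) (c : Fin n → ℝ) (f : Fin n → α),
    (∀ i, 0 ≤ c i) ∧ (∀ i, f i ∈ S) ∧ A = ∑ i, c i • f i}

/-- `Ω` is the state space of a GPT: a compact convex set whose affine hull avoids `0`
and whose linear span is all of `V`. -/
def IsGPT (Ω : Set V) : Prop :=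
  IsCompact Ω ∧ Convex ℝ Ω ∧ (0 : V) ∉ affineSpan ℝ Ω ∧ Submodule.span ℝ Ω = ⊤

/-- The positive cone `V₊` generated by the state space. -/
def posCone (Ω : Set V) : Set V := conicHull Ω

/-- The dual cone `V₊°`. -/
def dualCone (Ω : Set V) : Set V := {f : V | ∀ x ∈ posCone Ω, 0 ≤ ⟪f, x⟫}

/-- The unit effect: `⟨u, ω⟩ = 1` for every state. -/
def IsUnitEffect (Ω : Set V) (u : V) : Prop := ∀ ω ∈ Ω, ⟪u, ω⟫ = 1

/-- A measurement set `e x a` with inputs `x : Fin κ` and outcomes `a : Fin l`. -/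
def IsMeasSet (Ω : Set V) (u : V) {l κ : ℕ} (e : Fin κ → Fin l → V) : Prop :=
  (∀ x a, e x a ∈ dualCone Ω) ∧ (∀ x, ∑ a, e x a = u)

/-- Simulability of measurement sets via classical pre- and post-processing. -/
def Simulable {l κ m τ : ℕ} (N : Fin τ → Fin m → V) (E : Fin κ → Fin l → V) : Prop :=
  ∃ (nz : ℕ) (q : Fin nz → ℝ) (r : Fin τ → Fin nz → Fin κ → ℝ)
    (s : Fin τ → Fin nz → Fin l → Fin m → ℝ),
    IsPMF q ∧ (∀ y z, IsPMF (r y z)) ∧ (∀ y z a, IsPMF (s y z a)) ∧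
    ∀ y b, N y b = ∑ z, ∑ x, ∑ a, (q z * r y z x * s y z a b) • E x a

/-- Free (normalised) states of a cone `𝓕`. -/
def gptFree (𝓕 : Set V) (u : V) : Set V := {σ ∈ 𝓕 | ⟪u, σ⟫ = 1}

/-- `𝓕` is a closed convex cone inside `V₊` with at least one free state. -/
def IsFreeStateCone (Ω : Set V) (u : V) (𝓕 : Set V) : Prop :=
  𝓕 ⊆ posCone Ω ∧
  (∀ A ∈ 𝓕, ∀ c : ℝ, 0 ≤ c → c • A ∈ 𝓕) ∧
  (∀ A ∈ 𝓕, ∀ B ∈ 𝓕, A + B ∈ 𝓕) ∧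
  IsClosed 𝓕 ∧ (gptFree 𝓕 u).Nonempty

/-- Feasible set for the generalised robustness of a GPT state. -/
def RGSet (Ω : Set V) (F : Set V) (ω : V) : Set ℝ :=
  {r : ℝ | 0 ≤ r ∧ ∃ ωG ∈ Ω, ∃ σ ∈ F, ω + r • ωG = (1 + r) • σ}

/-- Generalised robustness of a GPT state. -/
def RG (Ω : Set V) (F : Set V) (ω : V) : ℝ := sInf (RGSet Ω F ω)

/-- Feasible set for the weight of resource of a GPT state. -/
def WGSet (Ω : Set V) (F : Set V) (ω : V) : Set ℝ :=
  {w : ℝ | 0 ≤ w ∧ w ≤ 1 ∧ ∃ ωG ∈ Ω, ∃ σ ∈ F, ω = w • ωG + (1 - w) • σ}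

/-- Weight of resource of a GPT state. -/
def WG (Ω : Set V) (F : Set V) (ω : V) : ℝ := sInf (WGSet Ω F ω)

/-- Feasible set for the generalised robustness of a measurement set. -/
def RGMSet (Ω : Set V) (u : V) {l κ : ℕ} (𝔽 : Set (Fin κ → Fin l → V))
    (E : Fin κ → Fin l → V) : Set ℝ :=
  {r : ℝ | 0 ≤ r ∧ ∃ G Ff : Fin κ → Fin l → V, IsMeasSet Ω u G ∧ Ff ∈ 𝔽 ∧
    ∀ x a, E x a + r • G x a = (1 + r) • Ff x a}

/-- Generalised robustness of a measurement set. -/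
def RGM (Ω : Set V) (u : V) {l κ : ℕ} (𝔽 : Set (Fin κ → Fin l → V))
    (E : Fin κ → Fin l → V) : ℝ := sInf (RGMSet Ω u 𝔽 E)

/-- Feasible set for the weight of resource of a measurement set. -/
def WGMSet (Ω : Set V) (u : V) {l κ : ℕ} (𝔽 : Set (Fin κ → Fin l → V))
    (E : Fin κ → Fin l → V) : Set ℝ :=
  {w : ℝ | 0 ≤ w ∧ w ≤ 1 ∧ ∃ G Ff : Fin κ → Fin l → V, IsMeasSet Ω u G ∧ Ff ∈ 𝔽 ∧
    ∀ x a, E x a = w • G x a + (1 - w) • Ff x a}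

/-- Weight of resource of a measurement set. -/
def WGM (Ω : Set V) (u : V) {l κ : ℕ} (𝔽 : Set (Fin κ → Fin l → V))
    (E : Fin κ → Fin l → V) : ℝ := sInf (WGMSet Ω u 𝔽 E)

/-- A GPT subchannel: positive and not increasing the unit effect on states. -/
def IsSubchannel (Ω : Set V) (u : V) (ξ : V →ₗ[ℝ] V) : Prop :=
  (∀ x ∈ posCone Ω, ξ x ∈ posCone Ω) ∧ (∀ ω ∈ Ω, ⟪u, ξ ω⟫ ≤ 1)

/-- A GPT instrument: subchannels whose sum is a channel. -/
def IsInstrument (Ω : Set V) (u : V) {m : ℕ} (ξ : Fin m → (V →ₗ[ℝ] V)) : Prop :=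
  (∀ b, IsSubchannel Ω u (ξ b)) ∧ (∀ ω ∈ Ω, ⟪u, ∑ b, ξ b ω⟫ = 1)

/-- A GPT game: a PMF with positive weights and a family of instruments. -/
def IsGame (Ω : Set V) (u : V) {m τ : ℕ} (p : Fin τ → ℝ)
    (Ξ : Fin τ → Fin m → (V →ₗ[ℝ] V)) : Prop :=
  IsPMF p ∧ (∀ y, 0 < p y) ∧ (∀ y, IsInstrument Ω u (Ξ y))

/-- The value `∑_{b,y} ⟨N_{b|y}, ξ_{b|y}(ω)⟩ p(y)`. -/
def gameValue {m τ : ℕ} (p : Fin τ → ℝ) (Ξ : Fin τ → Fin m → (V →ₗ[ℝ] V))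
    (ω : V) (N : Fin τ → Fin m → V) : ℝ :=
  ∑ y, ∑ b, p y * ⟪N y b, Ξ y b ω⟫

/-- GPT success probability for discrimination. -/
def GPsucc {l κ m τ : ℕ} (p : Fin τ → ℝ) (Ξ : Fin τ → Fin m → (V →ₗ[ℝ] V))
    (ω : V) (E : Fin κ → Fin l → V) : ℝ :=
  sSup {v : ℝ | ∃ N : Fin τ → Fin m → V, Simulable N E ∧ v = gameValue p Ξ ω N}

/-- GPT error probability for exclusion. -/
def GPerr {l κ m τ : ℕ} (p : Fin τ → ℝ) (Ξ : Fin τ → Fin m → (V →ₗ[ℝ] V))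
    (ω : V) (E : Fin κ → Fin l → V) : ℝ :=
  sInf {v : ℝ | ∃ N : Fin τ → Fin m → V, Simulable N E ∧ v = gameValue p Ξ ω N}

/-- `𝔽` is a set of measurement sets whose conic hull is closed. -/
def GoodFree (Ω : Set V) (u : V) {l κ : ℕ} (𝔽 : Set (Fin κ → Fin l → V)) : Prop :=
  (∀ E ∈ 𝔽, IsMeasSet Ω u E) ∧ IsClosed (conicHull 𝔽)

/-- The collection of free measurement sets is closed under simulability. -/
def ClosedUnderSim (𝔽 : ∀ l κ : ℕ, Set (Fin κ → Fin l → V)) : Prop :=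
  ∀ {l κ m τ : ℕ} (E : Fin κ → Fin l → V) (N : Fin τ → Fin m → V),
    E ∈ 𝔽 l κ → Simulable N E → N ∈ 𝔽 m τ

/-- Best fully free success probability. -/
def Dbest {l κ m τ : ℕ} (p : Fin τ → ℝ) (Ξ : Fin τ → Fin m → (V →ₗ[ℝ] V))
    (F : Set V) (𝔽 : Set (Fin κ → Fin l → V)) : ℝ :=
  sSup {v : ℝ | ∃ (σ : V) (N : Fin κ → Fin l → V), σ ∈ F ∧ N ∈ 𝔽 ∧ v = GPsucc p Ξ σ N}

/-- Best fully free error probability. -/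
def Ebest {l κ m τ : ℕ} (p : Fin τ → ℝ) (Ξ : Fin τ → Fin m → (V →ₗ[ℝ] V))
    (F : Set V) (𝔽 : Set (Fin κ → Fin l → V)) : ℝ :=
  sInf {v : ℝ | ∃ (σ : V) (N : Fin κ → Fin l → V), σ ∈ F ∧ N ∈ 𝔽 ∧ v = GPerr p Ξ σ N}



section DualityHelpers

variable {Ω : Set V} {u : V}

lemma zero_mem_conicHull {α : Type*} [AddCommMonoid α] [Module ℝ α] (S : Set α) :
    (0 : α) ∈ conicHull S :=
  ⟨0, Fin.elim0, Fin.elim0, fun i => i.elim0, fun i => i.elim0, by simp⟩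

lemma add_mem_conicHull {α : Type*} [AddCommMonoid α] [Module ℝ α] {S : Set α} {A B : α}
    (hA : A ∈ conicHull S) (hB : B ∈ conicHull S) : A + B ∈ conicHull S := by
  obtain ⟨n, c, f, hc, hf, rfl⟩ := hA
  obtain ⟨m, d, g, hd, hg, rfl⟩ := hB
  refine ⟨n + m, Fin.append c d, Fin.append f g, ?_, ?_, ?_⟩
  · exact fun i => Fin.addCases (fun j => by simpa [Fin.append_left] using hc j)
      (fun j => by simpa [Fin.append_right] using hd j) i
  · exact fun i => Fin.addCases (fun j => by simpa [Fin.append_left] using hf j)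
      (fun j => by simpa [Fin.append_right] using hg j) i
  · rw [Fin.sum_univ_add]
    simp [Fin.append_left, Fin.append_right]

lemma smul_mem_conicHull {α : Type*} [AddCommMonoid α] [Module ℝ α] {S : Set α} {A : α}
    {r : ℝ} (hr : 0 ≤ r) (hA : A ∈ conicHull S) : r • A ∈ conicHull S := by
  obtain ⟨n, c, f, hc, hf, rfl⟩ := hA
  exact ⟨n, fun i => r * c i, f, fun i => mul_nonneg hr (hc i), hf,
    by simp [Finset.smul_sum, smul_smul]⟩

lemma smul_mem_posCone {t : ℝ} {σ : V} (ht : 0 ≤ t) (hσ : σ ∈ Ω) : t • σ ∈ posCone Ω :=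
  ⟨1, fun _ => t, fun _ => σ, fun _ => ht, fun _ => hσ, by simp⟩

lemma mem_posCone_self {σ : V} (hσ : σ ∈ Ω) : σ ∈ posCone Ω := by
  simpa using smul_mem_posCone zero_le_one hσ

lemma posCone_decomp (hu : IsUnitEffect Ω u) (hconv : Convex ℝ Ω) {x : V}
    (hx : x ∈ posCone Ω) :
    0 ≤ ⟪u, x⟫ ∧ (x = 0 ∨ ∃ σ ∈ Ω, x = ⟪u, x⟫ • σ) := by
  obtain ⟨n, c, f, hc, hf, rfl⟩ := hx
  have h1 : ⟪u, ∑ i, c i • f i⟫ = ∑ i, c i := by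
    rw [inner_sum]
    exact Finset.sum_congr rfl fun i _ => by
      rw [real_inner_smul_right, hu _ (hf i), mul_one]
  rw [h1]
  have hnn : (0:ℝ) ≤ ∑ i, c i := Finset.sum_nonneg fun i _ => hc i
  refine ⟨hnn, ?_⟩
  rcases eq_or_lt_of_le hnn with h0 | hpos
  · left
    have hz : ∀ i ∈ Finset.univ, c i = 0 :=
      (Finset.sum_eq_zero_iff_of_nonneg (fun i _ => hc i)).1 h0.symm
    exact Finset.sum_eq_zero fun i hi => by rw [hz i hi, zero_smul]
  · right
    refine ⟨∑ i, (c i / ∑ j, c j) • f i, hconv.sum_mem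
      (fun i _ => div_nonneg (hc i) hpos.le)
      (by rw [← Finset.sum_div, div_self hpos.ne']) (fun i _ => hf i), ?_⟩
    rw [Finset.smul_sum]
    refine Finset.sum_congr rfl fun i _ => ?_
    rw [smul_smul]
    congr 1
    field_simp

lemma posCone_rep (hu : IsUnitEffect Ω u) (hconv : Convex ℝ Ω) (hne : Ω.Nonempty) {x : V}
    (hx : x ∈ posCone Ω) :
    0 ≤ ⟪u, x⟫ ∧ ∃ σ ∈ Ω, x = ⟪u, x⟫ • σ := by
  obtain ⟨hnn, h⟩ := posCone_decomp hu hconv hx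
  refine ⟨hnn, ?_⟩
  rcases h with rfl | h
  · obtain ⟨σ₀, hσ₀⟩ := hne
    exact ⟨σ₀, hσ₀, by simp⟩
  · exact h

lemma isClosed_posCone (hcomp : IsCompact Ω) (hconv : Convex ℝ Ω)
    (hu : IsUnitEffect Ω u) (hne : Ω.Nonempty) : IsClosed (posCone Ω) := by
  refine IsSeqClosed.isClosed ?_
  intro xs x hxs hlim
  have hrep : ∀ n, 0 ≤ ⟪u, xs n⟫ ∧ ∃ σ ∈ Ω, xs n = ⟪u, xs n⟫ • σ :=
    fun n => posCone_rep hu hconv hne (hxs n)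
  choose hnn σ hσΩ hxe using hrep
  obtain ⟨a, haΩ, φ, hφ, hσa⟩ := hcomp.tendsto_subseq hσΩ
  have hti : Continuous fun y : V => ⟪u, y⟫ := continuous_const.inner continuous_id
  have hx2 : Filter.Tendsto (fun n => xs (φ n)) Filter.atTop (nhds x) :=
    hlim.comp hφ.tendsto_atTop
  have ht : Filter.Tendsto (fun n => ⟪u, xs (φ n)⟫) Filter.atTop (nhds ⟪u, x⟫) :=
    (hti.tendsto x).comp hx2
  have hcomb : Filter.Tendsto (fun n => ⟪u, xs (φ n)⟫ • σ (φ n)) Filter.atTop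
      (nhds (⟪u, x⟫ • a)) := ht.smul hσa
  have hcomb' : Filter.Tendsto (fun n => xs (φ n)) Filter.atTop (nhds (⟪u, x⟫ • a)) :=
    hcomb.congr fun n => (hxe (φ n)).symm
  have hxeq : x = ⟪u, x⟫ • a := tendsto_nhds_unique hx2 hcomb'
  have hxnn : 0 ≤ ⟪u, x⟫ := ge_of_tendsto' ht fun n => hnn (φ n)
  rw [hxeq]
  exact smul_mem_posCone hxnn haΩ

end DualityHelpers

/-- dual conic program for the generalised robustness of a GPT state,
together with attainment of the defining infimum. -/
theorem gpt_robustness_state_dual {V : Type*} [NormedAddCommGroup V]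
    [InnerProductSpace ℝ V] [FiniteDimensional ℝ V]
    (Ω : Set V) (hΩ : IsGPT Ω) (u : V) (hu : IsUnitEffect Ω u)
    (𝓕 : Set V) (h𝓕 : IsFreeStateCone Ω u 𝓕)
    (ω : V) (hω : ω ∈ Ω)
    (hfin : (RGSet Ω (gptFree 𝓕 u) ω).Nonempty) :
    1 + RG Ω (gptFree 𝓕 u) ω =
      sSup {v : ℝ | ∃ z ∈ dualCone Ω,
        (∀ σ ∈ gptFree 𝓕 u, ⟪z, σ⟫ ≤ 1) ∧ v = ⟪z, ω⟫} ∧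
    RG Ω (gptFree 𝓕 u) ω ∈ RGSet Ω (gptFree 𝓕 u) ω := by
  obtain ⟨hcomp, hconv, -, -⟩ := hΩ
  obtain ⟨h𝓕sub, h𝓕smul, h𝓕add, h𝓕closed, h𝓕ne⟩ := h𝓕
  have hne : Ω.Nonempty := ⟨ω, hω⟩
  set F := gptFree 𝓕 u with hF
  set S := RGSet Ω F ω with hSdef
  have hposclosed : IsClosed (posCone Ω) := isClosed_posCone hcomp hconv hu hne
  have hzero𝓕 : (0:V) ∈ 𝓕 := by
    obtain ⟨σ₀, hσ₀, -⟩ := h𝓕ne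
    simpa using h𝓕smul σ₀ hσ₀ 0 le_rfl
  have hFsubΩ : F ⊆ Ω := by
    intro σ hσ
    obtain ⟨hσ𝓕, hσ1⟩ := hσ
    obtain ⟨-, σ', hσ', hrep⟩ := posCone_rep hu hconv hne (h𝓕sub hσ𝓕)
    rw [hσ1, one_smul] at hrep
    exact hrep ▸ hσ'
  have hFclosed : IsClosed F :=
    h𝓕closed.inter (isClosed_eq (continuous_const.inner continuous_id) continuous_const)
  have hFcomp : IsCompact F := hcomp.of_isClosed_subset hFclosed hFsubΩ
  have hSnn : ∀ r ∈ S, (0:ℝ) ≤ r := fun r hr => hr.1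
  have hSbdd : BddBelow S := ⟨0, hSnn⟩
  obtain ⟨R, hRS⟩ := hfin
  have hR0 : 0 ≤ R := hRS.1
  -- attainment of the infimum
  set T : Set (ℝ × V × V) :=
    (Set.Icc 0 R ×ˢ Ω ×ˢ F) ∩ {p | ω + p.1 • p.2.1 = (1 + p.1) • p.2.2} with hTdef
  have hTcomp : IsCompact T :=
    (isCompact_Icc.prod (hcomp.prod hFcomp)).inter_right
      (isClosed_eq (by fun_prop) (by fun_prop))
  have hS'comp : IsCompact (Prod.fst '' T) := hTcomp.image continuous_fst
  have hS'eq : Prod.fst '' T = S ∩ Set.Icc 0 R := by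
    ext r
    simp only [hTdef, Set.mem_image, Set.mem_inter_iff, Set.mem_prod, Set.mem_setOf_eq,
      Set.mem_Icc, hSdef, RGSet]
    constructor
    · rintro ⟨⟨r', g, σ⟩, ⟨⟨⟨hr0, hrR⟩, hg, hσ⟩, heq⟩, rfl⟩
      exact ⟨⟨hr0, g, hg, σ, hσ, heq⟩, hr0, hrR⟩
    · rintro ⟨⟨hr0, g, hg, σ, hσ, heq⟩, -, hrR⟩
      exact ⟨(r, g, σ), ⟨⟨⟨hr0, hrR⟩, hg, hσ⟩, heq⟩, rfl⟩
  have hS'ne : (Prod.fst '' T).Nonempty := by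
    rw [hS'eq]
    exact ⟨R, hRS, hR0, le_rfl⟩
  have hinf_eq : sInf S = sInf (Prod.fst '' T) := by
    apply le_antisymm
    · exact csInf_le_csInf hSbdd hS'ne (by rw [hS'eq]; exact Set.inter_subset_left)
    · refine le_csInf ⟨R, hRS⟩ fun r hr => ?_
      rcases le_total r R with h | h
      · exact csInf_le hS'comp.bddBelow (by rw [hS'eq]; exact ⟨hr, hSnn r hr, h⟩)
      · exact le_trans (csInf_le hS'comp.bddBelow
          (by rw [hS'eq]; exact ⟨hRS, hR0, le_rfl⟩)) h
  have hattain : RG Ω F ω ∈ S := by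
    have h1 : sInf (Prod.fst '' T) ∈ Prod.fst '' T := hS'comp.sInf_mem hS'ne
    have h2 : RG Ω F ω = sInf (Prod.fst '' T) := hinf_eq
    rw [h2]
    exact (hS'eq.subset h1).1
  have hr0 : 0 ≤ RG Ω F ω := hattain.1
  obtain ⟨-, g₀, hg₀, σ₀', hσ₀', heq₀⟩ := id hattain
  -- weak duality
  have weak : ∀ v ∈ {v : ℝ | ∃ z ∈ dualCone Ω, (∀ σ ∈ F, ⟪z, σ⟫ ≤ 1) ∧ v = ⟪z, ω⟫},
      v ≤ 1 + RG Ω F ω := by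
    rintro v ⟨z, hz, hz1, rfl⟩
    have h1 : ⟪z, ω⟫ + RG Ω F ω * ⟪z, g₀⟫ = (1 + RG Ω F ω) * ⟪z, σ₀'⟫ := by
      have := congrArg (fun y => ⟪z, y⟫) heq₀
      simpa [inner_add_right, real_inner_smul_right] using this
    have h2 : 0 ≤ ⟪z, g₀⟫ := hz _ (mem_posCone_self hg₀)
    have h3 : ⟪z, σ₀'⟫ ≤ 1 := hz1 _ hσ₀'
    nlinarith [mul_nonneg hr0 h2,
      mul_le_mul_of_nonneg_left h3 (by linarith : (0:ℝ) ≤ 1 + RG Ω F ω)]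
  have hDne : ({v : ℝ | ∃ z ∈ dualCone Ω, (∀ σ ∈ F, ⟪z, σ⟫ ≤ 1) ∧ v = ⟪z, ω⟫}).Nonempty :=
    ⟨0, 0, fun x _ => by simp, fun σ _ => by simp, by simp⟩
  have hDbdd : BddAbove {v : ℝ | ∃ z ∈ dualCone Ω, (∀ σ ∈ F, ⟪z, σ⟫ ≤ 1) ∧ v = ⟪z, ω⟫} :=
    ⟨1 + RG Ω F ω, weak⟩
  -- strong duality
  have strong : ∀ c, 0 < c → c < 1 + RG Ω F ω →
      ∃ v ∈ {v : ℝ | ∃ z ∈ dualCone Ω, (∀ σ ∈ F, ⟪z, σ⟫ ≤ 1) ∧ v = ⟪z, ω⟫}, c < v := by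
    intro c hc0 hcP
    set M := {y : V | ∃ s ∈ 𝓕, ⟪u, s⟫ ≤ c ∧ ∃ x ∈ posCone Ω, y = s - x} with hMdef
    have hMconv : Convex ℝ M := by
      rintro y₁ ⟨s₁, hs₁, hus₁, x₁, hx₁, rfl⟩ y₂ ⟨s₂, hs₂, hus₂, x₂, hx₂, rfl⟩ a b ha hb hab
      refine ⟨a • s₁ + b • s₂, h𝓕add _ (h𝓕smul _ hs₁ a ha) _ (h𝓕smul _ hs₂ b hb), ?_,
        a • x₁ + b • x₂,
        add_mem_conicHull (smul_mem_conicHull ha hx₁) (smul_mem_conicHull hb hx₂), ?_⟩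
      · rw [inner_add_right, real_inner_smul_right, real_inner_smul_right]
        nlinarith
      · rw [smul_sub, smul_sub]
        abel
    have hKcomp : IsCompact (𝓕 ∩ {s | ⟪u, s⟫ ≤ c}) := by
      have hB : IsCompact ((fun p : ℝ × V => p.1 • p.2) '' (Set.Icc 0 c ×ˢ Ω)) :=
        (isCompact_Icc.prod hcomp).image (continuous_fst.smul continuous_snd)
      refine hB.of_isClosed_subset
        (h𝓕closed.inter (isClosed_le (continuous_const.inner continuous_id)
          continuous_const)) ?_
      rintro s ⟨hs𝓕, hsc⟩
      obtain ⟨hnn, σ', hσ', hrep⟩ := posCone_rep hu hconv hne (h𝓕sub hs𝓕)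
      exact ⟨(⟪u, s⟫, σ'), ⟨⟨hnn, hsc⟩, hσ'⟩, hrep.symm⟩
    have hMclosed : IsClosed M := by
      refine IsSeqClosed.isClosed ?_
      intro ys y hys hlim
      choose s hs hsc x hx hyx using hys
      obtain ⟨s₀, hs₀, φ, hφ, hsφ⟩ := hKcomp.tendsto_subseq (fun n => ⟨hs n, hsc n⟩)
      have hyφ : Filter.Tendsto (fun n => ys (φ n)) Filter.atTop (nhds y) :=
        hlim.comp hφ.tendsto_atTop
      have hxφ : Filter.Tendsto (fun n => s (φ n) - ys (φ n)) Filter.atTop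
          (nhds (s₀ - y)) := hsφ.sub hyφ
      have hxmem : s₀ - y ∈ posCone Ω := by
        refine hposclosed.mem_of_tendsto hxφ (Filter.Eventually.of_forall fun n => ?_)
        rw [hyx (φ n)]
        simpa using hx (φ n)
      exact ⟨s₀, hs₀.1, hs₀.2, s₀ - y, hxmem, by abel⟩
    have hωM : ω ∉ M := by
      rintro ⟨s, hs, hsc, x, hx, hωeq⟩
      have hxval : s = ω + x := by rw [hωeq]; abel
      obtain ⟨hxnn, hxdec⟩ := posCone_decomp hu hconv hx
      have hus : ⟪u, s⟫ = 1 + ⟪u, x⟫ := by rw [hxval, inner_add_right, hu ω hω]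
      have hpos : (0:ℝ) < 1 + ⟪u, x⟫ := by linarith
      have hσ'𝓕 : (1 + ⟪u, x⟫)⁻¹ • s ∈ 𝓕 := h𝓕smul s hs _ (inv_nonneg.2 hpos.le)
      have hσ'1 : ⟪u, (1 + ⟪u, x⟫)⁻¹ • s⟫ = 1 := by
        rw [real_inner_smul_right, hus]
        field_simp
      have hmem : ⟪u, x⟫ ∈ S := by
        refine ⟨hxnn, ?_⟩
        rcases hxdec with rfl | ⟨σg, hσg, hrep⟩
        · refine ⟨ω, hω, (1 + ⟪u, (0:V)⟫)⁻¹ • s, ⟨hσ'𝓕, hσ'1⟩, ?_⟩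
          have hsω : s = ω := by simpa using hxval
          simp [inner_zero_right, hsω]
        · refine ⟨σg, hσg, (1 + ⟪u, x⟫)⁻¹ • s, ⟨hσ'𝓕, hσ'1⟩, ?_⟩
          rw [← hrep, smul_smul, mul_inv_cancel₀ hpos.ne', one_smul]
          exact hxval.symm
      have h5 : RG Ω F ω ≤ ⟪u, x⟫ := csInf_le hSbdd hmem
      linarith
    obtain ⟨f, t, hfM, htω⟩ := geometric_hahn_banach_closed_point hMconv hMclosed hωM
    have ht0 : 0 < t := by
      have h0M : (0:V) ∈ M :=
        ⟨0, hzero𝓕, by rw [inner_zero_right]; exact hc0.le, 0,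
          zero_mem_conicHull Ω, by simp⟩
      simpa using hfM 0 h0M
    have hfpos : ∀ x ∈ posCone Ω, 0 ≤ f x := by
      intro x hx
      by_contra hneg
      push_neg at hneg
      obtain ⟨n, hn⟩ := exists_nat_ge (t / (-f x))
      have hxM : (0:V) - (n:ℝ) • x ∈ M :=
        ⟨0, hzero𝓕, by rw [inner_zero_right]; exact hc0.le, (n:ℝ) • x,
          smul_mem_conicHull (by positivity) hx, rfl⟩
      have hlt := hfM _ hxM
      rw [map_sub, map_zero, map_smul] at hlt
      simp only [smul_eq_mul] at hlt
      have h8 : t ≤ (n:ℝ) * (-f x) := by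
        rw [div_le_iff₀ (by linarith)] at hn
        linarith
      linarith
    have hfσ : ∀ σ ∈ F, c * f σ < t := by
      intro σ hσ
      have hcσM : c • σ ∈ M :=
        ⟨c • σ, h𝓕smul σ hσ.1 c hc0.le,
          by rw [real_inner_smul_right, hσ.2, mul_one], 0,
          zero_mem_conicHull Ω, (sub_zero _).symm⟩
      simpa [map_smul, smul_eq_mul] using hfM _ hcσM
    set z := (c / t) • (InnerProductSpace.toDual ℝ V).symm f with hzdef
    have hzf : ∀ x, ⟪z, x⟫ = (c / t) * f x := fun x => by
      rw [hzdef, real_inner_smul_left, InnerProductSpace.toDual_symm_apply]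
    have hct : 0 < c / t := div_pos hc0 ht0
    refine ⟨⟪z, ω⟫, ⟨z, ?_, ?_, rfl⟩, ?_⟩
    · intro x hx
      rw [hzf]
      exact mul_nonneg hct.le (hfpos x hx)
    · intro σ hσ
      rw [hzf, div_mul_eq_mul_div, div_le_one ht0]
      exact (hfσ σ hσ).le
    · rw [hzf]
      calc c = (c / t) * t := by field_simp
      _ < (c / t) * f ω := mul_lt_mul_of_pos_left htω hct
  refine ⟨?_, hattain⟩
  apply le_antisymm
  · refine le_of_forall_lt fun c hc => ?_
    have hc'0 : 0 < max c ((1 + RG Ω F ω) / 2) :=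
      lt_of_lt_of_le (by linarith) (le_max_right _ _)
    have hc'P : max c ((1 + RG Ω F ω) / 2) < 1 + RG Ω F ω := max_lt hc (by linarith)
    obtain ⟨v, hvD, hv⟩ := strong _ hc'0 hc'P
    exact lt_of_le_of_lt (le_max_left c _) (lt_of_lt_of_le hv (le_csSup hDbdd hvD))
  · exact csSup_le hDne weak


end MultiObjectGPT
end
end
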